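/- arXiv:2508.13052 — 2 statements merged into one kernel-verified Lean document; each statement's English description precedes it below -/
import Mathlib

section
/- Suppose E_n : V → ℝ converges uniformly on compact V ⊆ ℝ^m to a continuous function E, and p_n : V → [0,1] converges pointwise to the indicator 𝟙_F of a set F ⊆ V, uniformly on compact subsets of the interior of F and of the complement of the closure of F. If E ≥ 0 on V and sup_V E_n is bounded, then for any sequence u_n ∈ argmax_V (E_n · p_n) whose accumulation point u̅ lies in the interior of F or outside the closure of F, one has limsup_n (E_n(u_n) p_n(u_n)) ≤ sup_{u ∈ F} E(u). -/
/-! With `S = sup_F E`, the product `En n x * pn n x` is eventually at most `S + ε`, uniformly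
in `x ∈ V`. On the compact set `K = V ∩ {E ≥ S + ε/2}`, which misses
`closure F` because `E ≤ S` there, `pn n` is uniformly small while `En n` is bounded above;
off `K`, the function `En n` is uniformly close to `E < S + ε/2`, and `pn n ∈ [0, 1]`. -/

open Filter Set

theorem mul_le_of_le_of_mem_Icc {a b p : ℝ} (hab : a ≤ b) (hb : 0 ≤ b) (hp : p ∈ Icc 0 1) :
    a * p ≤ b := by
  nlinarith [mul_nonneg (sub_nonneg.mpr hab) hp.1, mul_nonneg hb (sub_nonneg.mpr hp.2)]

theorem le_mul_of_le_of_mem_Icc {a b p : ℝ} (hba : b ≤ a) (hb : b ≤ 0) (hp : p ∈ Icc 0 1) :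
    b ≤ a * p := by
  nlinarith [mul_nonneg (sub_nonneg.mpr hba) hp.1, mul_nonneg (neg_nonneg.mpr hb) (sub_nonneg.mpr hp.2)]

theorem le_sSup_image_of_mem_closure {X : Type*} [TopologicalSpace X] {E : X → ℝ}
    (hE : Continuous E) {F : Set X} (hF : BddAbove (E '' F)) {x : X} (hx : x ∈ closure F) :
    E x ≤ sSup (E '' F) :=
  closure_minimal (fun _ hy => le_csSup hF (mem_image_of_mem E hy))
    (isClosed_le hE continuous_const) hx

section UniformLimits

variable {X : Type*} {V : Set X} {E : X → ℝ} {En pn : ℕ → X → ℝ}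

theorem eventually_forall_neg_one_le_mul (hEn : TendstoUniformlyOn En E atTop V)
    (hE : ∀ x ∈ V, 0 ≤ E x) (hp : ∀ n x, pn n x ∈ Icc 0 1) :
    ∀ᶠ n in atTop, ∀ x ∈ V, -1 ≤ En n x * pn n x := by
  filter_upwards [Metric.tendstoUniformlyOn_iff.mp hEn 1 one_pos] with n hn x hx
  have hclose := abs_lt.mp (Real.dist_eq _ _ ▸ hn x hx)
  exact le_mul_of_le_of_mem_Icc (by linarith [hE x hx]) (by norm_num) (hp n x)

theorem eventually_forall_mul_le_add [TopologicalSpace X] {F : Set X} (hV : IsCompact V) (hE : Continuous E)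
    (hEn : TendstoUniformlyOn En E atTop V) {C : ℝ} (hC : ∀ n, ∀ x ∈ V, En n x ≤ C)
    (hp : ∀ n x, pn n x ∈ Icc 0 1)
    (hp0 : ∀ K, IsCompact K → K ⊆ (closure F)ᶜ → TendstoUniformlyOn pn 0 atTop K)
    {S : ℝ} (hS : 0 ≤ S) (hES : ∀ x ∈ closure F, E x ≤ S) {ε : ℝ} (hε : 0 < ε) :
    ∀ᶠ n in atTop, ∀ x ∈ V, En n x * pn n x ≤ S + ε := by
  set K := V ∩ E ⁻¹' Ici (S + ε / 2)
  have hKF : K ⊆ (closure F)ᶜ := fun x hx hxF => by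
    linarith [hES x hxF, show S + ε / 2 ≤ E x from hx.2]
  set C' := max C 1
  have hC' : 0 < C' := one_pos.trans_le (le_max_right _ _)
  have hsmall := Metric.tendstoUniformlyOn_iff.mp
    (hp0 K (hV.inter_right (isClosed_Ici.preimage hE)) hKF) (ε / C') (by positivity)
  have hclose := Metric.tendstoUniformlyOn_iff.mp hEn (ε / 2) (by positivity)
  filter_upwards [hsmall, hclose] with n hsmall hclose x hx
  by_cases hxK : x ∈ K
  · have hpx : pn n x < ε / C' := by
      simpa [Real.dist_eq] using (abs_lt.mp (hsmall x hxK)).1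
    calc En n x * pn n x ≤ C' * pn n x :=
          mul_le_mul_of_nonneg_right ((hC n x hx).trans (le_max_left _ _)) (hp n x).1
      _ ≤ C' * (ε / C') := by gcongr
      _ = ε := mul_div_cancel₀ ε hC'.ne'
      _ ≤ S + ε := by linarith
  · have hEx : E x < S + ε / 2 := lt_of_not_ge fun h => hxK ⟨hx, h⟩
    have hEnx := abs_lt.mp (Real.dist_eq _ _ ▸ hclose x hx)
    exact mul_le_of_le_of_mem_Icc (by linarith) (by linarith) (hp n x)

end UniformLimits

theorem stmt15_general (m : ℕ) (V : Set (EuclideanSpace ℝ (Fin m))) (hV : IsCompact V)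
    (F : Set (EuclideanSpace ℝ (Fin m))) (hFV : F ⊆ V)
    (E : EuclideanSpace ℝ (Fin m) → ℝ) (hE : Continuous E)
    (En : ℕ → EuclideanSpace ℝ (Fin m) → ℝ)
    (hEn : TendstoUniformlyOn En E atTop V)
    (pn : ℕ → EuclideanSpace ℝ (Fin m) → ℝ)
    (hp01 : ∀ n u, pn n u ∈ Set.Icc (0 : ℝ) 1)
    (hpout : ∀ Kc : Set (EuclideanSpace ℝ (Fin m)), IsCompact Kc → Kc ⊆ (closure F)ᶜ →
      TendstoUniformlyOn (fun n => pn n) (F.indicator fun _ => (1 : ℝ)) atTop Kc)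
    (hEnonneg : ∀ u ∈ V, 0 ≤ E u)
    (hEbdd : ∃ C : ℝ, ∀ n, ∀ u ∈ V, En n u ≤ C)
    (u : ℕ → EuclideanSpace ℝ (Fin m))
    (hmax : ∀ n, u n ∈ V ∧ ∀ v ∈ V, En n v * pn n v ≤ En n (u n) * pn n (u n)) :
    Filter.limsup (fun n => En n (u n) * pn n (u n)) atTop ≤ sSup (E '' F) := by
  obtain ⟨C, hC⟩ := hEbdd
  have hS : 0 ≤ sSup (E '' F) :=
    Real.sSup_nonneg (forall_mem_image.mpr fun x hx => hEnonneg x (hFV hx))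
  have hES : ∀ x ∈ closure F, E x ≤ sSup (E '' F) := fun x =>
    le_sSup_image_of_mem_closure hE ((hV.image hE).bddAbove.mono (image_mono hFV))
  have hp0 : ∀ K, IsCompact K → K ⊆ (closure F)ᶜ → TendstoUniformlyOn pn 0 atTop K :=
    fun K hK hKF => (hpout K hK hKF).congr_right fun x hx =>
      indicator_of_notMem (fun hxF => hKF hx (subset_closure hxF)) _
  have hlb : ∀ᶠ n in atTop, -1 ≤ En n (u n) * pn n (u n) :=
    (eventually_forall_neg_one_le_mul hEn hEnonneg hp01).mono fun n h => h (u n) (hmax n).1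
  refine le_of_forall_pos_le_add fun ε hε =>
    limsup_le_of_le (isCoboundedUnder_le_of_eventually_le atTop hlb) ?_
  exact (eventually_forall_mul_le_add hV hE hEn hC hp01 hp0 hS hES hε).mono
    fun n h => h (u n) (hmax n).1

theorem stmt15 (m : ℕ) (V : Set (EuclideanSpace ℝ (Fin m))) (hV : IsCompact V)
    (F : Set (EuclideanSpace ℝ (Fin m))) (hFV : F ⊆ V) (hFne : F.Nonempty)
    (E : EuclideanSpace ℝ (Fin m) → ℝ) (hE : Continuous E)
    (En : ℕ → EuclideanSpace ℝ (Fin m) → ℝ)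
    (hEn : TendstoUniformlyOn En E atTop V)
    (pn : ℕ → EuclideanSpace ℝ (Fin m) → ℝ)
    (hp01 : ∀ n u, pn n u ∈ Set.Icc (0 : ℝ) 1)
    (hppt : ∀ u ∈ V, Tendsto (fun n => pn n u) atTop
      (nhds (F.indicator (fun _ => (1 : ℝ)) u)))
    (hpin : ∀ Kc : Set (EuclideanSpace ℝ (Fin m)), IsCompact Kc → Kc ⊆ interior F →
      TendstoUniformlyOn (fun n => pn n) (F.indicator fun _ => (1 : ℝ)) atTop Kc)
    (hpout : ∀ Kc : Set (EuclideanSpace ℝ (Fin m)), IsCompact Kc → Kc ⊆ (closure F)ᶜ →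
      TendstoUniformlyOn (fun n => pn n) (F.indicator fun _ => (1 : ℝ)) atTop Kc)
    (hEnonneg : ∀ u ∈ V, 0 ≤ E u)
    (hEbdd : ∃ C : ℝ, ∀ n, ∀ u ∈ V, En n u ≤ C)
    (u : ℕ → EuclideanSpace ℝ (Fin m))
    (hmax : ∀ n, u n ∈ V ∧ ∀ v ∈ V, En n v * pn n v ≤ En n (u n) * pn n (u n))
    (ubar : EuclideanSpace ℝ (Fin m))
    (hacc : ∃ φ : ℕ → ℕ, StrictMono φ ∧ Tendsto (u ∘ φ) atTop (nhds ubar))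
    (hloc : ubar ∈ interior F ∨ ubar ∈ (closure F)ᶜ) :
    Filter.limsup (fun n => En n (u n) * pn n (u n)) atTop ≤ sSup (E '' F) :=
  stmt15_general m V hV F hFV E hE En hEn pn hp01 hpout hEnonneg hEbdd u hmax
end

section
/- If σ_n → 0 with σ_n > 0 and μ_n → J(u) where J(u) > y⁻* with y⁻* = lim y⁻_n, then EI_n(u) = (y⁻_n − μ_n)Φ(z_n) + σ_n φ(z_n) with z_n = (y⁻_n − μ_n)/σ_n converges to 0; if instead J(u) < y⁻*, then EI_n(u) → y⁻* − J(u) > 0. -/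
open Filter MeasureTheory

noncomputable def stdNormalPDF (t : ℝ) : ℝ := (Real.sqrt (2 * Real.pi))⁻¹ * Real.exp (-t ^ 2 / 2)

noncomputable def stdNormalCDF (z : ℝ) : ℝ := ∫ t in Set.Iic z, stdNormalPDF t

lemma stdNormalPDF_nonneg (t : ℝ) : 0 ≤ stdNormalPDF t := by
  unfold stdNormalPDF
  positivity

lemma stdNormalPDF_le (t : ℝ) : stdNormalPDF t ≤ (Real.sqrt (2 * Real.pi))⁻¹ := by
  unfold stdNormalPDF
  calc (Real.sqrt (2 * Real.pi))⁻¹ * Real.exp (-t ^ 2 / 2)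
      ≤ (Real.sqrt (2 * Real.pi))⁻¹ * 1 := by
        apply mul_le_mul_of_nonneg_left _ (by positivity)
        rw [Real.exp_le_one_iff]
        nlinarith [sq_nonneg t]
    _ = _ := mul_one _

lemma stdNormalPDF_eq (t : ℝ) :
    stdNormalPDF t = (Real.sqrt (2 * Real.pi))⁻¹ * Real.exp (-(1/2) * t ^ 2) := by
  unfold stdNormalPDF; ring_nf

lemma integrable_stdNormalPDF : Integrable stdNormalPDF := by
  have h : Integrable (fun t : ℝ => Real.exp (-(1/2 : ℝ) * t ^ 2)) :=
    integrable_exp_neg_mul_sq (by norm_num)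
  have := h.const_mul ((Real.sqrt (2 * Real.pi))⁻¹)
  apply this.congr
  filter_upwards with t
  rw [stdNormalPDF_eq]

lemma continuous_stdNormalPDF : Continuous stdNormalPDF := by
  unfold stdNormalPDF
  fun_prop

lemma integral_stdNormalPDF : ∫ t, stdNormalPDF t = 1 := by
  have h : ∫ t : ℝ, Real.exp (-(1/2 : ℝ) * t ^ 2) = Real.sqrt (Real.pi / (1/2)) :=
    integral_gaussian (1/2)
  have h2 : (Real.pi / (1/2 : ℝ)) = 2 * Real.pi := by ring
  simp only [stdNormalPDF_eq]
  rw [MeasureTheory.integral_const_mul, h, h2, inv_mul_cancel₀]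
  positivity

lemma stdNormalCDF_eq (z : ℝ) :
    stdNormalCDF z = ∫ t, Set.indicator (Set.Iic z) stdNormalPDF t := by
  rw [integral_indicator measurableSet_Iic]; rfl

lemma tendsto_stdNormalCDF_atBot : Tendsto stdNormalCDF atBot (nhds 0) := by
  have h0 : (0 : ℝ) = ∫ t : ℝ, (0 : ℝ) := by simp
  rw [h0]
  simp only [funext stdNormalCDF_eq]
  apply tendsto_integral_filter_of_dominated_convergence stdNormalPDF
  · filter_upwards with z
    exact (continuous_stdNormalPDF.stronglyMeasurable.indicator measurableSet_Iic).aestronglyMeasurable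
  · filter_upwards with z
    filter_upwards with t
    rw [Real.norm_eq_abs, abs_of_nonneg (Set.indicator_nonneg (fun s _ => stdNormalPDF_nonneg s) t)]
    exact Set.indicator_le_self' (fun s _ => stdNormalPDF_nonneg s) t
  · exact integrable_stdNormalPDF
  · filter_upwards with t
    have hev : ∀ᶠ z in atBot, Set.indicator (Set.Iic z) stdNormalPDF t = (0 : ℝ) := by
      filter_upwards [Iio_mem_atBot t] with z hz
      simp only [Set.mem_Iio] at hz; simp [Set.indicator_apply, Set.mem_Iic]; intro h; linarith
    exact Tendsto.congr' (hev.mono fun z hz => hz.symm) tendsto_const_nhds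

lemma tendsto_stdNormalCDF_atTop : Tendsto stdNormalCDF atTop (nhds 1) := by
  rw [← integral_stdNormalPDF]
  simp only [funext stdNormalCDF_eq]
  apply tendsto_integral_filter_of_dominated_convergence stdNormalPDF
  · filter_upwards with z
    exact (continuous_stdNormalPDF.stronglyMeasurable.indicator measurableSet_Iic).aestronglyMeasurable
  · filter_upwards with z
    filter_upwards with t
    rw [Real.norm_eq_abs, abs_of_nonneg (Set.indicator_nonneg (fun s _ => stdNormalPDF_nonneg s) t)]
    exact Set.indicator_le_self' (fun s _ => stdNormalPDF_nonneg s) t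
  · exact integrable_stdNormalPDF
  · filter_upwards with t
    have hev : ∀ᶠ z in atTop, Set.indicator (Set.Iic z) stdNormalPDF t = stdNormalPDF t := by
      filter_upwards [Ici_mem_atTop t] with z hz
      simp only [Set.mem_Ici] at hz; simp [Set.indicator_apply, Set.mem_Iic]; intro h; linarith
    exact Tendsto.congr' (hev.mono fun z hz => hz.symm) tendsto_const_nhds

theorem stmt18 (μ σ ybest : ℕ → ℝ) (Ju ystar : ℝ)
    (hσpos : ∀ n, 0 < σ n)
    (hσ : Tendsto σ atTop (nhds 0))
    (hμ : Tendsto μ atTop (nhds Ju))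
    (hy : Tendsto ybest atTop (nhds ystar)) :
    (ystar < Ju →
      Tendsto (fun n => (ybest n - μ n) * stdNormalCDF ((ybest n - μ n) / σ n) +
        σ n * stdNormalPDF ((ybest n - μ n) / σ n)) atTop (nhds 0)) ∧
    (Ju < ystar →
      Tendsto (fun n => (ybest n - μ n) * stdNormalCDF ((ybest n - μ n) / σ n) +
        σ n * stdNormalPDF ((ybest n - μ n) / σ n)) atTop (nhds (ystar - Ju)) ∧
      0 < ystar - Ju) := by
  have hd : Tendsto (fun n => ybest n - μ n) atTop (nhds (ystar - Ju)) := hy.sub hμ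
  -- inverse of σ tends to atTop
  have hσ' : Tendsto σ atTop (nhdsWithin 0 (Set.Ioi 0)) :=
    tendsto_nhdsWithin_of_tendsto_nhds_of_eventually_within σ hσ
      (Eventually.of_forall fun n => hσpos n)
  have hσinv : Tendsto (fun n => (σ n)⁻¹) atTop atTop :=
    tendsto_inv_nhdsGT_zero.comp hσ'
  -- the σ * pdf term always tends to 0
  have hterm2 : Tendsto (fun n => σ n * stdNormalPDF ((ybest n - μ n) / σ n)) atTop (nhds 0) := by
    apply squeeze_zero (fun n => mul_nonneg (hσpos n).le (stdNormalPDF_nonneg _))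
      (fun n => mul_le_mul_of_nonneg_left (stdNormalPDF_le _) (hσpos n).le)
    have := hσ.mul_const ((Real.sqrt (2 * Real.pi))⁻¹)
    simpa using this
  constructor
  · intro h
    have hc : ystar - Ju < 0 := by linarith
    have hz : Tendsto (fun n => (ybest n - μ n) / σ n) atTop atBot := by
      simp only [div_eq_mul_inv]
      exact Tendsto.neg_mul_atTop hc hd hσinv
    have hcdf : Tendsto (fun n => stdNormalCDF ((ybest n - μ n) / σ n)) atTop (nhds 0) :=
      tendsto_stdNormalCDF_atBot.comp hz
    have h1 : Tendsto (fun n => (ybest n - μ n) * stdNormalCDF ((ybest n - μ n) / σ n))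
        atTop (nhds ((ystar - Ju) * 0)) := hd.mul hcdf
    rw [mul_zero] at h1
    simpa using h1.add hterm2
  · intro h
    refine ⟨?_, by linarith⟩
    have hc : 0 < ystar - Ju := by linarith
    have hz : Tendsto (fun n => (ybest n - μ n) / σ n) atTop atTop := by
      simp only [div_eq_mul_inv]
      exact Tendsto.pos_mul_atTop hc hd hσinv
    have hcdf : Tendsto (fun n => stdNormalCDF ((ybest n - μ n) / σ n)) atTop (nhds 1) :=
      tendsto_stdNormalCDF_atTop.comp hz
    have h1 : Tendsto (fun n => (ybest n - μ n) * stdNormalCDF ((ybest n - μ n) / σ n))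
        atTop (nhds ((ystar - Ju) * 1)) := hd.mul hcdf
    rw [mul_one] at h1
    simpa using h1.add hterm2
end
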